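/- Let k be a field, V a k-vector space, σ : V ⊗ V → V ⊗ V a linear map satisfying the Yang–Baxter equation (σ ⊗ id)∘(id ⊗ σ)∘(σ ⊗ id) = (id ⊗ σ)∘(σ ⊗ id)∘(id ⊗ σ), and ε : V → k a linear map satisfying (ε ⊗ ε)∘σ = ε ⊗ ε (a braided character). For n ≥ 1 and 1 ≤ j ≤ n−1 write σ^j := id^{⊗(j−1)} ⊗ σ ⊗ id^{⊗(n−j−1)} : V^{⊗n} → V^{⊗n}. Define d_n : V^{⊗n} → V^{⊗(n−1)} by d_n := Σ_{i=1}^{n} (−1)^{i−1} (ε ⊗ id^{⊗(n−1)}) ∘ σ^1 ∘ σ^2 ∘ ⋯ ∘ σ^{i−1} (where σ^{i−1} is applied first and the i = 1 summand is ε ⊗ id^{⊗(n−1)}). Then d_{n−1} ∘ d_n = 0 for all n ≥ 2. -/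

import Mathlib

open TensorProduct

universe u

/-- The iterated tensor power `V^{⊗n}` (right-nested, with a copy of `k` at the end). -/
noncomputable def TP (k : Type u) [Field k] (V : Type u) [AddCommGroup V] [Module k V] :
    ℕ → ModuleCat k
  | 0 => ModuleCat.of k k
  | n + 1 => ModuleCat.of k (V ⊗[k] TP k V n)

variable (k : Type u) [Field k] (V : Type u) [AddCommGroup V] [Module k V]

/-- `σ` applied at the first two tensor factors of `V^{⊗(n+2)}`. -/
noncomputable def sig1 (σ : V ⊗[k] V →ₗ[k] V ⊗[k] V) (n : ℕ) :
    TP k V (n + 2) →ₗ[k] TP k V (n + 2) :=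
  (TensorProduct.assoc k V V (TP k V n)).toLinearMap
    ∘ₗ (σ.rTensor (TP k V n))
    ∘ₗ (TensorProduct.assoc k V V (TP k V n)).symm.toLinearMap

/-- `σ^j := id^{⊗(j-1)} ⊗ σ ⊗ id^{⊗(n-j-1)}`, the braiding applied at positions `j`, `j+1`
of `V^{⊗n}` (the identity when the position is out of range). -/
noncomputable def sigAt (σ : V ⊗[k] V →ₗ[k] V ⊗[k] V) :
    ℕ → (n : ℕ) → (TP k V n →ₗ[k] TP k V n)
  | _, 0 => LinearMap.id
  | _, 1 => LinearMap.id
  | 0, _ + 2 => LinearMap.id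
  | 1, n + 2 => sig1 k V σ n
  | j + 2, n + 2 => LinearMap.lTensor V (sigAt σ (j + 1) (n + 1))

/-- The composite `σ^1 ∘ σ^2 ∘ ⋯ ∘ σ^i` (with `σ^i` applied first; the identity for
`i = 0`). -/
noncomputable def sigPrefix (σ : V ⊗[k] V →ₗ[k] V ⊗[k] V) :
    ℕ → (n : ℕ) → (TP k V n →ₗ[k] TP k V n)
  | 0, _ => LinearMap.id
  | i + 1, n => sigPrefix σ i n ∘ₗ sigAt k V σ (i + 1) n

/-- `ε ⊗ id^{⊗(n-1)} : V^{⊗n} → V^{⊗(n-1)}`, evaluation of `ε` on the first factor. -/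
noncomputable def epsFirst (ε : V →ₗ[k] k) (n : ℕ) : TP k V (n + 1) →ₗ[k] TP k V n :=
  (TensorProduct.lid k (TP k V n)).toLinearMap ∘ₗ (ε.rTensor (TP k V n))

/-- The left braided differential with trivial coefficients:
`d_{n+1} = Σ_{i=0}^{n} (−1)^i (ε ⊗ id^{⊗ n}) ∘ σ^1 ∘ σ^2 ∘ ⋯ ∘ σ^i : V^{⊗(n+1)} → V^{⊗n}`. -/
noncomputable def brDiff (σ : V ⊗[k] V →ₗ[k] V ⊗[k] V) (ε : V →ₗ[k] k) (n : ℕ) :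
    TP k V (n + 1) →ₗ[k] TP k V n :=
  ∑ i ∈ Finset.range (n + 1),
    ((-1 : k) ^ i) • (epsFirst k V ε n ∘ₗ sigPrefix k V σ i (n + 1))

/-!
Write `d_{n+1} = ∑ᵢ (-1)^i ∂ᵢ` with `∂ᵢ = (ε ⊗ id) ∘ σ^1 ∘ ⋯ ∘ σ^i`. The braid relations among the
`σ^j` (Yang–Baxter for neighbours, commutation for distant ones) let `id ⊗ (σ^1 ⋯ σ^i)` slide past
`σ^1 ⋯ σ^j` for `i < j`, and `σ^1 ⋯ σ^{j+1} = σ^1 ∘ (id ⊗ σ^1 ⋯ σ^j)`, where the leading `σ^1` is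
absorbed by `ε ⊗ ε` because `ε` is a braided character. This gives the simplicial identity
`∂ᵢ ∘ ∂_{j+1} = ∂ⱼ ∘ ∂ᵢ` for `i ≤ j`, so the terms of `d ∘ d` cancel in pairs.
-/

open Finset

theorem sum_range_sum_range_eq_zero_of_shift_antisymm {A : Type*} [AddCommGroup A]
    (f : ℕ → ℕ → A) (n : ℕ) (h : ∀ i j, i ≤ j → j ≤ n → f i (j + 1) = -f j i) :
    ∑ i ∈ range (n + 1), ∑ j ∈ range (n + 2), f i j = 0 := by
  induction n with
  | zero => simp [sum_range_succ, h 0 0 le_rfl le_rfl]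
  | succ n ih =>
    have hlast : ∑ i ∈ range (n + 1), f i (n + 2) = -∑ j ∈ range (n + 1), f (n + 1) j := by
      rw [← sum_neg_distrib]
      exact sum_congr rfl fun i hi => h i (n + 1) (by simp at hi; omega) le_rfl
    rw [sum_range_succ, sum_congr rfl fun i _ => sum_range_succ (f i) (n + 2), sum_add_distrib,
      ih fun i j hij hjn => h i j hij (by omega), hlast, sum_range_succ (f (n + 1)) (n + 2),
      sum_range_succ (f (n + 1)) (n + 1), h (n + 1) (n + 1) le_rfl le_rfl]
    abel

section Braiding

variable {R M W W' : Type*} [CommSemiring R] [AddCommMonoid M] [Module R M]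
  [AddCommMonoid W] [Module R W] [AddCommMonoid W'] [Module R W']

theorem LinearMap.sum_comp_sum {A B C ι κ : Type*} [AddCommMonoid A] [AddCommMonoid B]
    [AddCommMonoid C] [Module R A] [Module R B] [Module R C] (s : Finset ι) (t : Finset κ)
    (f : ι → B →ₗ[R] C) (g : κ → A →ₗ[R] B) :
    (∑ i ∈ s, f i) ∘ₗ (∑ j ∈ t, g j) = ∑ i ∈ s, ∑ j ∈ t, f i ∘ₗ g j := by
  refine LinearMap.ext fun x => ?_
  simp [LinearMap.sum_apply, map_sum]

theorem LinearMap.lTensor_comp_lTensor_comm {f g : Module.End R W} (h : f ∘ₗ g = g ∘ₗ f) :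
    f.lTensor M ∘ₗ g.lTensor M = g.lTensor M ∘ₗ f.lTensor M := by
  rw [← LinearMap.lTensor_comp, h, LinearMap.lTensor_comp]

theorem LinearMap.lTensor_braid_relation {f g : Module.End R W} (h : f ∘ₗ g ∘ₗ f = g ∘ₗ f ∘ₗ g) :
    f.lTensor M ∘ₗ g.lTensor M ∘ₗ f.lTensor M = g.lTensor M ∘ₗ f.lTensor M ∘ₗ g.lTensor M := by
  rw [← LinearMap.lTensor_comp, ← LinearMap.lTensor_comp, h, LinearMap.lTensor_comp,
    LinearMap.lTensor_comp]

variable (W) in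
noncomputable def braidHead (σ : M ⊗[R] M →ₗ[R] M ⊗[R] M) : Module.End R (M ⊗[R] (M ⊗[R] W)) :=
  (TensorProduct.assoc R M M W).conj (σ.rTensor W)

def IsYangBaxter (σ : M ⊗[R] M →ₗ[R] M ⊗[R] M) : Prop :=
  braidHead M σ ∘ₗ σ.lTensor M ∘ₗ braidHead M σ = σ.lTensor M ∘ₗ braidHead M σ ∘ₗ σ.lTensor M

def IsBraidedCharacter (σ : M ⊗[R] M →ₗ[R] M ⊗[R] M) (ε : M →ₗ[R] R) : Prop :=
  map ε ε ∘ₗ σ = map ε ε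

variable (R M W) in
noncomputable def assocTriple :
    ((M ⊗[R] (M ⊗[R] M)) ⊗[R] W) ≃ₗ[R] (M ⊗[R] (M ⊗[R] (M ⊗[R] W))) :=
  TensorProduct.assoc R M (M ⊗[R] M) W ≪≫ₗ (TensorProduct.assoc R M M W).lTensor M

theorem assocTriple_assoc_tmul (y : M ⊗[R] M) (w : M) (c : W) :
    assocTriple R M W (TensorProduct.assoc R M M M (y ⊗ₜ w) ⊗ₜ c)
      = TensorProduct.assoc R M M (M ⊗[R] W) (y ⊗ₜ (w ⊗ₜ c)) := by
  induction y using TensorProduct.induction_on with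
  | zero => simp
  | tmul a b => rfl
  | add y z hy hz => simp only [add_tmul, map_add, hy, hz]

theorem braidHead_tensor (σ : M ⊗[R] M →ₗ[R] M ⊗[R] M) :
    braidHead (M ⊗[R] W) σ = (assocTriple R M W).conj ((braidHead M σ).rTensor W) := by
  ext u v w c
  exact (assocTriple_assoc_tmul (σ (u ⊗ₜ v)) w c).symm

theorem lTensor_braidHead (σ : M ⊗[R] M →ₗ[R] M ⊗[R] M) :
    (braidHead W σ).lTensor M = (assocTriple R M W).conj ((σ.lTensor M).rTensor W) := by
  ext u v w c
  simp [braidHead, assocTriple]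

theorem IsYangBaxter.braid_relation_head {σ : M ⊗[R] M →ₗ[R] M ⊗[R] M} (hσ : IsYangBaxter σ) :
    braidHead (M ⊗[R] W) σ ∘ₗ (braidHead W σ).lTensor M ∘ₗ braidHead (M ⊗[R] W) σ
      = (braidHead W σ).lTensor M ∘ₗ braidHead (M ⊗[R] W) σ ∘ₗ (braidHead W σ).lTensor M := by
  simp only [braidHead_tensor, lTensor_braidHead, ← LinearEquiv.conj_comp,
    ← LinearMap.rTensor_comp]
  rw [hσ]

theorem braidHead_comp_lTensor_lTensor (σ : M ⊗[R] M →ₗ[R] M ⊗[R] M) (g : W →ₗ[R] W') :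
    braidHead W' σ ∘ₗ (g.lTensor M).lTensor M = (g.lTensor M).lTensor M ∘ₗ braidHead W σ := by
  have hnat : ∀ (y : M ⊗[R] M) (x : W), TensorProduct.assoc R M M W' (y ⊗ₜ g x)
      = (g.lTensor M).lTensor M (TensorProduct.assoc R M M W (y ⊗ₜ x)) := by
    intro y x
    induction y using TensorProduct.induction_on with
    | zero => simp
    | tmul a b => rfl
    | add y z hy hz => simp only [add_tmul, map_add, hy, hz]
  ext u v x
  exact hnat (σ (u ⊗ₜ v)) x

variable (W) in
noncomputable def evalHead {N : Type*} [AddCommMonoid N] [Module R N] (φ : N →ₗ[R] R) :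
    N ⊗[R] W →ₗ[R] W :=
  (TensorProduct.lid R W).toLinearMap ∘ₗ φ.rTensor W

theorem evalHead_comp_lTensor {N : Type*} [AddCommMonoid N] [Module R N] (φ : N →ₗ[R] R)
    (g : W →ₗ[R] W') : evalHead W' φ ∘ₗ g.lTensor N = g ∘ₗ evalHead W φ := by
  ext; simp [evalHead]

theorem IsBraidedCharacter.evalHead_evalHead_braidHead {σ : M ⊗[R] M →ₗ[R] M ⊗[R] M}
    {ε : M →ₗ[R] R} (hε : IsBraidedCharacter σ ε) :
    evalHead W ε ∘ₗ evalHead (M ⊗[R] W) ε ∘ₗ braidHead W σ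
      = evalHead W ε ∘ₗ evalHead (M ⊗[R] W) ε := by
  have hpair : ∀ y : M ⊗[R] M, ∀ c : W, evalHead W ε (evalHead (M ⊗[R] W) ε
      (TensorProduct.assoc R M M W (y ⊗ₜ c))) = TensorProduct.lid R R (map ε ε y) • c := by
    intro y c
    induction y using TensorProduct.induction_on with
    | zero => simp
    | tmul a b => simp [evalHead, mul_smul]
    | add y z hy hz => simp [add_tmul, add_smul, hy, hz]
  refine ext_threefold' fun u v c => ?_
  change evalHead W ε (evalHead (M ⊗[R] W) ε (TensorProduct.assoc R M M W (σ (u ⊗ₜ v) ⊗ₜ c)))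
    = evalHead W ε (evalHead (M ⊗[R] W) ε (TensorProduct.assoc R M M W ((u ⊗ₜ v) ⊗ₜ c)))
  rw [hpair, hpair, ← LinearMap.comp_apply (map ε ε) σ, hε]

end Braiding

variable {k V} (σ : V ⊗[k] V →ₗ[k] V ⊗[k] V) (ε : V →ₗ[k] k)

theorem sigAt_zero_right (j : ℕ) : sigAt k V σ j 0 = LinearMap.id := by
  rcases j with _ | _ | j <;> rfl

theorem sigAt_one_right (j : ℕ) : sigAt k V σ j 1 = LinearMap.id := by
  rcases j with _ | _ | j <;> rfl

theorem sigAt_zero_left (m : ℕ) : sigAt k V σ 0 m = LinearMap.id := by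
  rcases m with _ | _ | m <;> rfl

theorem sigAt_succ_succ (j m : ℕ) :
    sigAt k V σ (j + 2) (m + 1) = (sigAt k V σ (j + 1) m).lTensor V := by
  rcases m with _ | m
  · rw [sigAt_zero_right, sigAt_one_right, LinearMap.lTensor_id]; rfl
  · rfl

theorem sigAt_comm {i j : ℕ} (hij : i + 2 ≤ j) (m : ℕ) :
    sigAt k V σ i m ∘ₗ sigAt k V σ j m = sigAt k V σ j m ∘ₗ sigAt k V σ i m := by
  induction i generalizing j m with
  | zero => rw [sigAt_zero_left, LinearMap.id_comp, LinearMap.comp_id]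
  | succ i ih =>
    obtain ⟨j, rfl⟩ : ∃ j', j = j' + 2 := ⟨j - 2, by omega⟩
    match m, i with
    | 0, _ => simp only [sigAt_zero_right, LinearMap.id_comp]
    | 1, _ => simp only [sigAt_one_right, LinearMap.id_comp]
    | m + 2, 0 =>
      obtain ⟨j, rfl⟩ : ∃ j', j = j' + 1 := ⟨j - 1, by omega⟩
      rw [sigAt_succ_succ, sigAt_succ_succ]
      exact braidHead_comp_lTensor_lTensor σ (sigAt k V σ (j + 1) m)
    | m + 2, i + 1 =>
      rw [sigAt_succ_succ, sigAt_succ_succ]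
      exact LinearMap.lTensor_comp_lTensor_comm (ih (by omega) _)

theorem sigAt_comp_sigPrefix {b c : ℕ} (hcb : c + 2 ≤ b) (m : ℕ) :
    sigAt k V σ b m ∘ₗ sigPrefix k V σ c m = sigPrefix k V σ c m ∘ₗ sigAt k V σ b m := by
  induction c with
  | zero => rfl
  | succ c ih =>
    rw [sigPrefix, ← LinearMap.comp_assoc, ih (by omega), LinearMap.comp_assoc,
      ← sigAt_comm σ hcb, LinearMap.comp_assoc]

theorem sigPrefix_succ_eq_sigAt_one_comp (j m : ℕ) :
    sigPrefix k V σ (j + 1) (m + 2)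
      = sigAt k V σ 1 (m + 2) ∘ₗ (sigPrefix k V σ j (m + 1)).lTensor V := by
  induction j with
  | zero => rw [sigPrefix, sigPrefix, sigPrefix, LinearMap.lTensor_id]; rfl
  | succ j ih =>
    rw [sigPrefix, ih, sigPrefix, LinearMap.lTensor_comp, sigAt_succ_succ]
    rfl

theorem epsFirst_comp_lTensor {m m' : ℕ} (g : TP k V m →ₗ[k] TP k V m') :
    epsFirst k V ε m' ∘ₗ g.lTensor V = g ∘ₗ epsFirst k V ε m :=
  evalHead_comp_lTensor ε g

noncomputable def brFace (n i : ℕ) : TP k V (n + 1) →ₗ[k] TP k V n :=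
  epsFirst k V ε n ∘ₗ sigPrefix k V σ i (n + 1)

theorem brDiff_eq_sum_brFace (n : ℕ) :
    brDiff k V σ ε n = ∑ i ∈ range (n + 1), (-1 : k) ^ i • brFace σ ε n i :=
  rfl

variable {σ ε}

theorem IsYangBaxter.sigAt_braid_relation (hσ : IsYangBaxter σ) {i m : ℕ} (hi : 1 ≤ i)
    (him : i + 2 ≤ m) :
    sigAt k V σ i m ∘ₗ sigAt k V σ (i + 1) m ∘ₗ sigAt k V σ i m
      = sigAt k V σ (i + 1) m ∘ₗ sigAt k V σ i m ∘ₗ sigAt k V σ (i + 1) m := by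
  induction i, hi using Nat.le_induction generalizing m with
  | base =>
    obtain ⟨m, rfl⟩ : ∃ m', m = m' + 3 := ⟨m - 3, by omega⟩
    exact hσ.braid_relation_head
  | succ i hi ih =>
    obtain ⟨m, rfl⟩ : ∃ m', m = m' + 1 := ⟨m - 1, by omega⟩
    obtain ⟨i, rfl⟩ : ∃ i', i = i' + 1 := ⟨i - 1, by omega⟩
    rw [sigAt_succ_succ, sigAt_succ_succ]
    exact LinearMap.lTensor_braid_relation (ih (by omega))

theorem IsYangBaxter.sigAt_succ_comp_sigPrefix (hσ : IsYangBaxter σ) {i j m : ℕ} (hi : 1 ≤ i)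
    (hij : i + 1 ≤ j) (hjm : j + 1 ≤ m) :
    sigAt k V σ (i + 1) m ∘ₗ sigPrefix k V σ j m = sigPrefix k V σ j m ∘ₗ sigAt k V σ i m := by
  induction j, hij using Nat.le_induction with
  | base =>
    obtain ⟨i, rfl⟩ : ∃ i', i = i' + 1 := ⟨i - 1, by omega⟩
    rw [sigPrefix, sigPrefix, LinearMap.comp_assoc, ← LinearMap.comp_assoc _ (sigPrefix k V σ i m),
      sigAt_comp_sigPrefix σ le_rfl, LinearMap.comp_assoc, LinearMap.comp_assoc,
      ← hσ.sigAt_braid_relation hi (by omega), LinearMap.comp_assoc]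
  | succ j hij ih =>
    rw [sigPrefix, ← LinearMap.comp_assoc, ih (by omega), LinearMap.comp_assoc,
      sigAt_comm σ (by omega), LinearMap.comp_assoc]

theorem IsYangBaxter.lTensor_sigPrefix_comp_sigPrefix (hσ : IsYangBaxter σ) {i j m : ℕ}
    (hij : i < j) (hjm : j ≤ m) :
    (sigPrefix k V σ i m).lTensor V ∘ₗ sigPrefix k V σ j (m + 1)
      = sigPrefix k V σ j (m + 1) ∘ₗ sigPrefix k V σ i (m + 1) := by
  induction i with
  | zero => rw [sigPrefix, sigPrefix, LinearMap.lTensor_id]; rfl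
  | succ i ih =>
    rw [sigPrefix, LinearMap.lTensor_comp, ← sigAt_succ_succ]
    -- `erw`: `TP k V (m + 1)` and `V ⊗[k] TP k V m` carry defeq but different instances
    erw [LinearMap.comp_assoc, hσ.sigAt_succ_comp_sigPrefix (by omega) (by omega) (by omega),
      ← LinearMap.comp_assoc, ih (by omega)]
    rfl

theorem IsBraidedCharacter.epsFirst_comp_epsFirst_comp_sigAt_one (hε : IsBraidedCharacter σ ε)
    (m : ℕ) :
    epsFirst k V ε m ∘ₗ epsFirst k V ε (m + 1) ∘ₗ sigAt k V σ 1 (m + 2)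
      = epsFirst k V ε m ∘ₗ epsFirst k V ε (m + 1) :=
  hε.evalHead_evalHead_braidHead

theorem brFace_comp_brFace (hσ : IsYangBaxter σ) (hε : IsBraidedCharacter σ ε) {i j m : ℕ}
    (hij : i ≤ j) (hjm : j ≤ m) :
    brFace σ ε m i ∘ₗ brFace σ ε (m + 1) (j + 1) = brFace σ ε m j ∘ₗ brFace σ ε (m + 1) i := by
  refine LinearMap.ext fun x => ?_
  let εm := epsFirst k V ε m
  let εm1 := epsFirst k V ε (m + 1)
  let P := fun l => sigPrefix k V σ l
  calc εm (P i (m + 1) (εm1 (P (j + 1) (m + 2) x)))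
      = εm (εm1 ((P i (m + 1)).lTensor V (P (j + 1) (m + 2) x))) :=
        congrArg εm (LinearMap.congr_fun (epsFirst_comp_lTensor ε _) _).symm
    _ = εm (εm1 (P (j + 1) (m + 2) (P i (m + 2) x))) :=
        congrArg (εm ∘ εm1) (LinearMap.congr_fun
          (hσ.lTensor_sigPrefix_comp_sigPrefix (by omega) (by omega)) x)
    _ = εm (εm1 (sigAt k V σ 1 (m + 2) ((P j (m + 1)).lTensor V (P i (m + 2) x)))) :=
        congrArg (εm ∘ εm1) (LinearMap.congr_fun (sigPrefix_succ_eq_sigAt_one_comp σ j m) _)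
    _ = εm (εm1 ((P j (m + 1)).lTensor V (P i (m + 2) x))) :=
        LinearMap.congr_fun (hε.epsFirst_comp_epsFirst_comp_sigAt_one m) _
    _ = εm (P j (m + 1) (εm1 (P i (m + 2) x))) :=
        congrArg εm (LinearMap.congr_fun (epsFirst_comp_lTensor ε _) _)

/-- If `σ` satisfies the Yang–Baxter equation and `ε` is a braided character
(`(ε ⊗ ε) ∘ σ = ε ⊗ ε`), then the braided differential squares to zero:
`d_{n-1} ∘ d_n = 0` for all `n ≥ 2`. -/
theorem brDiff_squared_zero (σ : V ⊗[k] V →ₗ[k] V ⊗[k] V) (ε : V →ₗ[k] k)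
    (hYB : (TensorProduct.assoc k V V V).toLinearMap
        ∘ₗ (σ.rTensor V)
        ∘ₗ (TensorProduct.assoc k V V V).symm.toLinearMap
        ∘ₗ (σ.lTensor V)
        ∘ₗ (TensorProduct.assoc k V V V).toLinearMap
        ∘ₗ (σ.rTensor V)
        ∘ₗ (TensorProduct.assoc k V V V).symm.toLinearMap
      = (σ.lTensor V)
        ∘ₗ (TensorProduct.assoc k V V V).toLinearMap
        ∘ₗ (σ.rTensor V)
        ∘ₗ (TensorProduct.assoc k V V V).symm.toLinearMap
        ∘ₗ (σ.lTensor V))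
    (hchar : (TensorProduct.map ε ε) ∘ₗ σ = TensorProduct.map ε ε) :
    ∀ n : ℕ, brDiff k V σ ε n ∘ₗ brDiff k V σ ε (n + 1) = 0 := by
  have hσ : IsYangBaxter σ := hYB
  intro n
  rw [brDiff_eq_sum_brFace, brDiff_eq_sum_brFace, LinearMap.sum_comp_sum]
  refine sum_range_sum_range_eq_zero_of_shift_antisymm _ n fun i j hij hjn => ?_
  rw [LinearMap.smul_comp, LinearMap.comp_smul, LinearMap.smul_comp, LinearMap.comp_smul,
    brFace_comp_brFace hσ hchar hij hjn, smul_smul, smul_smul, ← neg_smul, pow_succ]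
  congr 1
  ring
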